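/- Let α ∈ ℂ with 0 < Re(α) < 1, let ξ ∈ ℝⁿ with 1/10 ≤ |ξ| ≤ 10, and let τ ∈ ℝ with |τ| ≠ |ξ|. Then for each j ∈ ℤ, |∫_{2^{j-1}}^{2^j} e^{2πi(|ξ|-τ)r} |rξ|^{-α} r^{2α-1} dr| ≤ B·e^{c|Im α|}·2^{j·Re α} if 2^j ≤ ||τ|-|ξ||^{-1}, and ≤ B·e^{c|Im α|}·||τ|-|ξ||^{-1}·2^{j(Re α - 1)} if 2^j > ||τ|-|ξ||^{-1}, where B depends only on Re α and c > 0 is an absolute constant. -/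

import Mathlib

open Real Complex intervalIntegral

/-!
Since `(r ν) ^ (-α) * r ^ (2α - 1) = ν ^ (-α) * r ^ (α - 1)` for `r, ν > 0`, the integral is
`ν ^ (-α)` times `∫ e^{iωr} r^{α-1} dr` over `[s, 2s]`, `s = 2^{j-1}`, with `ω = 2π(ν - τ)`, and
`|ω| ≥ ||τ| - ν|`. Bounding the integrand by `s^{Re α - 1}` gives `s^{Re α}`; integrating the
phase by parts gives `(2 + ‖α - 1‖) s^{Re α - 1} / |ω|`. The constants come from
`ν ^ (-Re α) ≤ 10`, `2 + ‖α - 1‖ ≤ 3 e^{|Im α|}` and `s^{Re α - 1} ≤ 2 · 2^{j(Re α - 1)}`.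
-/

section OscillatoryPowerIntegral

variable {s t ω : ℝ} {β : ℂ}

lemma norm_cexp_ofReal_mul_ofReal_mul_I (ω r : ℝ) : ‖cexp (ω * r * I)‖ = 1 := by
  simpa using norm_exp_ofReal_mul_I (ω * r)

lemma norm_cexp_mul_cpow_le (hs : 0 < s) (hβ : β.re ≤ 0) {r : ℝ} (hr : s ≤ r) :
    ‖cexp (ω * r * I) * (r : ℂ) ^ β‖ ≤ s ^ β.re := by
  rw [norm_mul, norm_cexp_ofReal_mul_ofReal_mul_I, one_mul,
    norm_cpow_eq_rpow_re_of_pos (hs.trans_le hr)]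
  exact rpow_le_rpow_of_nonpos hs hr hβ

lemma norm_integral_cexp_mul_cpow_le (hs : 0 < s) (hst : s ≤ t) (hβ : β.re ≤ 0) :
    ‖∫ r in s..t, cexp (ω * r * I) * (r : ℂ) ^ β‖ ≤ s ^ β.re * (t - s) := by
  have := norm_integral_le_of_norm_le_const (a := s) (b := t) (C := s ^ β.re)
    (f := fun r : ℝ => cexp (ω * r * I) * (r : ℂ) ^ β) fun r hr => by
      rw [Set.uIoc_of_le hst] at hr
      exact norm_cexp_mul_cpow_le hs hβ hr.1.le
  rwa [abs_of_nonneg (sub_nonneg.2 hst)] at this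

-- Integration by parts against the primitive `exp (ω r I) / (ω I)` of the phase.
lemma norm_integral_cexp_mul_cpow_le_div (hs : 0 < s) (hst : s ≤ t) (hβ : β.re ≤ 0)
    (hω : ω ≠ 0) :
    ‖∫ r in s..t, cexp (ω * r * I) * (r : ℂ) ^ β‖
      ≤ (2 + ‖β‖ * (t - s) / s) * s ^ β.re / |ω| := by
  have hpos : ∀ r ∈ Set.uIcc s t, 0 < r := fun r hr =>
    hs.trans_le (Set.uIcc_of_le hst ▸ hr).1
  have hωI : (ω : ℂ) * I ≠ 0 := mul_ne_zero (ofReal_ne_zero.2 hω) I_ne_zero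
  have hu : ∀ r ∈ Set.uIcc s t,
      HasDerivAt (fun r : ℝ => (r : ℂ) ^ β) (β * (r : ℂ) ^ (β - 1)) r := fun r hr =>
    (hasStrictDerivAt_cpow_const (ofReal_mem_slitPlane.2 (hpos r hr))).hasDerivAt.comp_ofReal
  have hv : ∀ r ∈ Set.uIcc s t,
      HasDerivAt (fun r : ℝ => cexp (ω * r * I) / (ω * I)) (cexp (ω * r * I)) r := by
    intro r _
    have := (((hasDerivAt_id (r : ℂ)).const_mul ((ω : ℂ) * I)).cexp.div_const
      ((ω : ℂ) * I)).comp_ofReal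
    simpa [mul_div_cancel_right₀ _ hωI, mul_right_comm] using this
  have hu' : IntervalIntegrable (fun r : ℝ => β * (r : ℂ) ^ (β - 1)) MeasureTheory.volume s t :=
    ContinuousOn.intervalIntegrable fun r hr => (continuousAt_const.mul
      (continuousAt_ofReal_cpow_const r _ (Or.inr (hpos r hr).ne'))).continuousWithinAt
  have hv' : IntervalIntegrable (fun r : ℝ => cexp (ω * r * I)) MeasureTheory.volume s t :=
    (by fun_prop : Continuous fun r : ℝ => cexp (ω * r * I)).intervalIntegrable s t
  have hvnorm : ∀ r : ℝ, ‖cexp (ω * r * I) / (ω * I)‖ = |ω|⁻¹ := fun r => by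
    rw [norm_div, norm_cexp_ofReal_mul_ofReal_mul_I, norm_mul, norm_I, mul_one, norm_real,
      Real.norm_eq_abs, one_div]
  have hboundary : ∀ r ∈ Set.Icc s t,
      ‖(r : ℂ) ^ β * (cexp (ω * r * I) / (ω * I))‖ ≤ s ^ β.re / |ω| := fun r hr => by
    rw [norm_mul, hvnorm, norm_cpow_eq_rpow_re_of_pos (hs.trans_le hr.1), ← div_eq_mul_inv]
    exact div_le_div_of_nonneg_right (rpow_le_rpow_of_nonpos hs hr.1 hβ) (abs_nonneg ω)
  have hbulk : ‖∫ r in s..t, β * (r : ℂ) ^ (β - 1) * (cexp (ω * r * I) / (ω * I))‖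
      ≤ ‖β‖ * s ^ (β.re - 1) / |ω| * (t - s) := by
    rw [← abs_of_nonneg (sub_nonneg.2 hst)]
    refine norm_integral_le_of_norm_le_const fun r hr => ?_
    rw [Set.uIoc_of_le hst] at hr
    have hr0 := hs.trans hr.1
    rw [norm_mul, hvnorm, norm_mul, norm_cpow_eq_rpow_re_of_pos hr0, sub_re, one_re,
      ← div_eq_mul_inv]
    exact div_le_div_of_nonneg_right (mul_le_mul_of_nonneg_left
      (rpow_le_rpow_of_nonpos hs hr.1.le (by linarith)) (norm_nonneg β)) (abs_nonneg ω)
  have hIBP := integral_mul_deriv_eq_deriv_mul hu hv hu' hv'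
  simp_rw [mul_comm (cexp _)]
  rw [hIBP]
  calc _ ≤ ‖(t : ℂ) ^ β * (cexp (ω * t * I) / (ω * I))‖
        + ‖(s : ℂ) ^ β * (cexp (ω * s * I) / (ω * I))‖
        + ‖∫ r in s..t, β * (r : ℂ) ^ (β - 1) * (cexp (ω * r * I) / (ω * I))‖ :=
        norm_sub_le_of_le (norm_sub_le _ _) le_rfl
    _ ≤ s ^ β.re / |ω| + s ^ β.re / |ω| + ‖β‖ * s ^ (β.re - 1) / |ω| * (t - s) := by
        gcongr
        exacts [hboundary t ⟨hst, le_rfl⟩, hboundary s ⟨le_rfl, hst⟩]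
    _ = (2 + ‖β‖ * (t - s) / s) * s ^ β.re / |ω| := by
        rw [rpow_sub_one hs.ne']
        field_simp
        ring

end OscillatoryPowerIntegral

lemma ofReal_mul_cpow_neg_mul_cpow {r ν : ℝ} (hr : 0 < r) (hν : 0 ≤ ν) (α : ℂ) :
    ((r * ν : ℝ) : ℂ) ^ (-α) * (r : ℂ) ^ (2 * α - 1) = (ν : ℂ) ^ (-α) * (r : ℂ) ^ (α - 1) := by
  rw [ofReal_mul, mul_cpow_ofReal_nonneg hr.le hν, show α - 1 = -α + (2 * α - 1) by ring,
    cpow_add _ _ (ofReal_ne_zero.2 hr.ne')]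
  ring

lemma rpow_neg_le_ten {ν a : ℝ} (hν : 1 / 10 ≤ ν) (ha₀ : 0 ≤ a) (ha₁ : a ≤ 1) :
    ν ^ (-a) ≤ 10 :=
  calc ν ^ (-a) ≤ (1 / 10 : ℝ) ^ (-a) := rpow_le_rpow_of_nonpos (by norm_num) hν (by linarith)
    _ = (10 : ℝ) ^ a := by rw [one_div, inv_rpow (by norm_num), ← rpow_neg (by norm_num), neg_neg]
    _ ≤ 10 := by simpa using rpow_le_rpow_of_exponent_le (by norm_num : (1 : ℝ) ≤ 10) ha₁

lemma two_add_norm_sub_one_le {α : ℂ} (h₀ : 0 ≤ α.re) (h₁ : α.re ≤ 1) :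
    2 + ‖α - 1‖ ≤ 3 * Real.exp |α.im| := by
  have hre : |(α - 1).re| ≤ 1 := by
    rw [sub_re, one_re, abs_of_nonpos (by linarith)]
    linarith
  have := norm_le_abs_re_add_abs_im (α - 1)
  have := Real.add_one_le_exp |α.im|
  have := Real.one_le_exp (abs_nonneg α.im)
  rw [sub_im, one_im, sub_zero] at *
  linarith

lemma two_zpow_sub_one_rpow (j : ℤ) (x : ℝ) :
    ((2 : ℝ) ^ (j - 1)) ^ x = 2 ^ (-x) * 2 ^ ((j : ℝ) * x) := by
  rw [← rpow_intCast, ← rpow_mul zero_le_two, ← rpow_add two_pos]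
  push_cast
  ring_nf

noncomputable def dyadicPiece (α : ℂ) (ν τ : ℝ) (j : ℤ) : ℂ :=
  ∫ r in ((2 : ℝ) ^ (j - 1))..((2 : ℝ) ^ j),
    cexp (2 * π * I * ((ν : ℂ) - τ) * r) * ((r * ν : ℝ) : ℂ) ^ (-α) * (r : ℂ) ^ (2 * α - 1)

section DyadicPiece

variable {α : ℂ} {ν : ℝ} (τ : ℝ) (j : ℤ)

lemma two_zpow_eq_two_mul_zpow_sub_one : (2 : ℝ) ^ j = 2 * 2 ^ (j - 1) := by
  rw [zpow_sub_one₀ two_ne_zero]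
  ring

lemma norm_dyadicPiece_eq (hν : 0 < ν) :
    ‖dyadicPiece α ν τ j‖ = ν ^ (-α.re) *
      ‖∫ r in ((2 : ℝ) ^ (j - 1))..((2 : ℝ) ^ j),
        cexp ((2 * π * (ν - τ) : ℝ) * r * I) * (r : ℂ) ^ (α - 1)‖ := by
  have hs : (0 : ℝ) < 2 ^ (j - 1) := zpow_pos two_pos _
  have hst : (2 : ℝ) ^ (j - 1) ≤ 2 ^ j := by rw [two_zpow_eq_two_mul_zpow_sub_one j]; linarith
  rw [dyadicPiece, ← neg_re, ← norm_cpow_eq_rpow_re_of_pos hν, ← norm_mul, ← integral_const_mul]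
  congr 1
  refine integral_congr fun r hr => ?_
  rw [Set.uIcc_of_le hst] at hr
  rw [mul_assoc, ofReal_mul_cpow_neg_mul_cpow (hs.trans_le hr.1) hν.le]
  push_cast
  ring_nf

lemma norm_dyadicPiece_le (hν : 1 / 10 ≤ ν) (h₀ : 0 ≤ α.re) (h₁ : α.re ≤ 1) :
    ‖dyadicPiece α ν τ j‖ ≤ 60 * Real.exp |α.im| * 2 ^ ((j : ℝ) * α.re) := by
  rw [norm_dyadicPiece_eq τ j (by linarith), two_zpow_eq_two_mul_zpow_sub_one j]
  have hs : (0 : ℝ) < 2 ^ (j - 1) := zpow_pos two_pos _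
  have hJ := norm_integral_cexp_mul_cpow_le (ω := 2 * π * (ν - τ)) (β := α - 1)
    (t := 2 * 2 ^ (j - 1)) hs (by linarith) (by simpa using h₁)
  rw [show (2 : ℝ) * 2 ^ (j - 1) - 2 ^ (j - 1) = 2 ^ (j - 1) by ring, sub_re, one_re,
    ← rpow_add_one hs.ne', sub_add_cancel, two_zpow_sub_one_rpow] at hJ
  have h2 : (2 : ℝ) ^ (-α.re) ≤ 1 := rpow_le_one_of_one_le_of_nonpos one_le_two (by linarith)
  have hE := Real.one_le_exp (abs_nonneg α.im)
  calc _ ≤ 10 * (1 * 2 ^ ((j : ℝ) * α.re)) := by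
        gcongr
        · exact rpow_neg_le_ten hν h₀ h₁
        · exact hJ.trans (by gcongr)
    _ ≤ 60 * Real.exp |α.im| * 2 ^ ((j : ℝ) * α.re) := by
        have := rpow_pos_of_pos two_pos ((j : ℝ) * α.re)
        nlinarith

lemma norm_dyadicPiece_le_div (hν : 1 / 10 ≤ ν) (hτ : |τ| ≠ ν) (h₀ : 0 ≤ α.re)
    (h₁ : α.re ≤ 1) :
    ‖dyadicPiece α ν τ j‖
      ≤ 60 * Real.exp |α.im| * |(|τ| - ν)|⁻¹ * 2 ^ ((j : ℝ) * (α.re - 1)) := by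
  rw [norm_dyadicPiece_eq τ j (by linarith), two_zpow_eq_two_mul_zpow_sub_one j]
  have hs : (0 : ℝ) < 2 ^ (j - 1) := zpow_pos two_pos _
  have hd : 0 < |(|τ| - ν)| := abs_pos.2 (sub_ne_zero.2 hτ)
  have hω : |(|τ| - ν)| ≤ |2 * π * (ν - τ)| :=
    calc |(|τ| - ν)| ≤ |ν - τ| := by
          simpa [abs_of_pos (by linarith : 0 < ν), abs_sub_comm] using
            abs_abs_sub_abs_le_abs_sub τ ν
      _ ≤ 2 * π * |ν - τ| := le_mul_of_one_le_left (abs_nonneg _) (by linarith [pi_gt_three])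
      _ = |2 * π * (ν - τ)| := by rw [abs_mul, abs_of_pos two_pi_pos]
  have hJ := norm_integral_cexp_mul_cpow_le_div (ω := 2 * π * (ν - τ)) (β := α - 1)
    (t := 2 * 2 ^ (j - 1)) hs (by linarith) (by simpa using h₁)
    (abs_pos.1 (hd.trans_le hω))
  rw [show (2 : ℝ) * 2 ^ (j - 1) - 2 ^ (j - 1) = 2 ^ (j - 1) by ring,
    mul_div_cancel_right₀ _ hs.ne', sub_re, one_re, two_zpow_sub_one_rpow] at hJ
  have h2 : (2 : ℝ) ^ (-(α.re - 1)) ≤ 2 := by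
    simpa using rpow_le_rpow_of_exponent_le one_le_two (by linarith : -(α.re - 1) ≤ 1)
  calc _ ≤ 10 * (3 * Real.exp |α.im| * (2 * 2 ^ ((j : ℝ) * (α.re - 1))) / |(|τ| - ν)|) := by
        gcongr
        · exact rpow_neg_le_ten hν h₀ h₁
        · refine hJ.trans ?_
          gcongr
          exact two_add_norm_sub_one_le h₀ h₁
    _ = 60 * Real.exp |α.im| * |(|τ| - ν)|⁻¹ * 2 ^ ((j : ℝ) * (α.re - 1)) := by ring

end DyadicPiece

theorem stmt_2 :
    ∃ c > (0:ℝ), ∀ a : ℝ, 0 < a → a < 1 → ∃ B > (0:ℝ),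
      ∀ (n : ℕ) (α : ℂ), α.re = a →
      ∀ ξ : EuclideanSpace ℝ (Fin n), 1 / 10 ≤ ‖ξ‖ → ‖ξ‖ ≤ 10 →
      ∀ τ : ℝ, |τ| ≠ ‖ξ‖ →
      ∀ j : ℤ,
        ((2:ℝ) ^ j ≤ |(|τ| - ‖ξ‖)|⁻¹ →
          ‖∫ r in ((2:ℝ) ^ (j - 1))..((2:ℝ) ^ j),
              Complex.exp (2 * π * Complex.I * ((‖ξ‖ : ℂ) - τ) * r) *
                ((r * ‖ξ‖ : ℝ) : ℂ) ^ (-α) * (r : ℂ) ^ (2 * α - 1)‖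
            ≤ B * Real.exp (c * |α.im|) * (2:ℝ) ^ ((j : ℝ) * a)) ∧
        (|(|τ| - ‖ξ‖)|⁻¹ < (2:ℝ) ^ j →
          ‖∫ r in ((2:ℝ) ^ (j - 1))..((2:ℝ) ^ j),
              Complex.exp (2 * π * Complex.I * ((‖ξ‖ : ℂ) - τ) * r) *
                ((r * ‖ξ‖ : ℝ) : ℂ) ^ (-α) * (r : ℂ) ^ (2 * α - 1)‖
            ≤ B * Real.exp (c * |α.im|) * |(|τ| - ‖ξ‖)|⁻¹ * (2:ℝ) ^ ((j : ℝ) * (a - 1))) := by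
  refine ⟨1, one_pos, fun a ha₀ ha₁ => ⟨60, by norm_num, fun n α hα ξ hξ _ τ hτ j => ?_⟩⟩
  subst hα
  simp only [one_mul]
  exact ⟨fun _ => norm_dyadicPiece_le τ j hξ ha₀.le ha₁.le,
    fun _ => norm_dyadicPiece_le_div τ j hξ hτ ha₀.le ha₁.le⟩
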